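/- In the sedenion algebra 𝕊, with α = e₁ + e₁₀ and β = e₇ + e₁₂, the polynomial f(x) = α x − β has no roots, but its companion polynomial C_f(x) = N(f(x)) = 2x² + 2 has roots in 𝕊 (every element of trace 0 and norm 1). Hence not every root of the companion polynomial is quadratically equivalent to a root of f when dim A ≥ 16. -/

import Mathlib

/-- Cayley–Dickson double (with γ = -1) of an algebra with involution. -/
def CD (A : Type*) : Type _ := A × A

namespace CD

variable {A : Type*}

instance [AddCommGroup A] : AddCommGroup (CD A) := inferInstanceAs (AddCommGroup (A × A))
noncomputable instance [AddCommGroup A] [Module ℝ A] : Module ℝ (CD A) :=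
  inferInstanceAs (Module ℝ (A × A))

/-- Build an element of the double from its two halves. -/
def mk (a b : A) : CD A := (a, b)

section
set_option linter.unusedSectionVars false

/-- A star operation fixing `1`. -/
class StarOne (A : Type*) [One A] [Star A] : Prop where
  star_one : star (1 : A) = 1

variable [NonAssocRing A] [StarAddMonoid A] [StarOne A]

instance : One (CD A) := ⟨((1 : A), 0)⟩
instance : Mul (CD A) :=
  ⟨fun x y => (x.1 * y.1 - star y.2 * x.2, y.2 * x.1 + x.2 * star y.1)⟩
instance : Star (CD A) := ⟨fun x => (star x.1, -x.2)⟩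

lemma mul_def (x y : CD A) :
    x * y = (x.1 * y.1 - star y.2 * x.2, y.2 * x.1 + x.2 * star y.1) := rfl
lemma one_def : (1 : CD A) = ((1 : A), 0) := rfl
lemma star_def (x : CD A) : star x = (star x.1, -x.2) := rfl
lemma add_def (x y : CD A) : x + y = (x.1 + y.1, x.2 + y.2) := rfl
lemma zero_def : (0 : CD A) = ((0 : A), 0) := rfl

instance instNonAssocRing : NonAssocRing (CD A) where
  __ := (inferInstance : AddCommGroup (CD A))
  left_distrib a b c := by
    have hm1 : ∀ x y : CD A, (x * y).1 = x.1 * y.1 - star y.2 * x.2 := fun _ _ => rfl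
    have hm2 : ∀ x y : CD A, (x * y).2 = y.2 * x.1 + x.2 * star y.1 := fun _ _ => rfl
    have ha1 : ∀ x y : CD A, (x + y).1 = x.1 + y.1 := fun _ _ => rfl
    have ha2 : ∀ x y : CD A, (x + y).2 = x.2 + y.2 := fun _ _ => rfl
    have hz1 : (0 : CD A).1 = 0 := rfl
    have hz2 : (0 : CD A).2 = 0 := rfl
    have ho1 : (1 : CD A).1 = 1 := rfl
    have ho2 : (1 : CD A).2 = 0 := rfl
    have hs1 : ∀ x : CD A, (star x).1 = star x.1 := fun _ => rfl
    have hs2 : ∀ x : CD A, (star x).2 = -x.2 := fun _ => rfl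
    refine Prod.ext ?_ ?_ <;>
      simp [hm1, hm2, ha1, ha2, hz1, hz2, ho1, ho2, hs1, hs2, mul_add, add_mul, star_add] <;> abel
  right_distrib a b c := by
    have hm1 : ∀ x y : CD A, (x * y).1 = x.1 * y.1 - star y.2 * x.2 := fun _ _ => rfl
    have hm2 : ∀ x y : CD A, (x * y).2 = y.2 * x.1 + x.2 * star y.1 := fun _ _ => rfl
    have ha1 : ∀ x y : CD A, (x + y).1 = x.1 + y.1 := fun _ _ => rfl
    have ha2 : ∀ x y : CD A, (x + y).2 = x.2 + y.2 := fun _ _ => rfl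
    have hz1 : (0 : CD A).1 = 0 := rfl
    have hz2 : (0 : CD A).2 = 0 := rfl
    have ho1 : (1 : CD A).1 = 1 := rfl
    have ho2 : (1 : CD A).2 = 0 := rfl
    have hs1 : ∀ x : CD A, (star x).1 = star x.1 := fun _ => rfl
    have hs2 : ∀ x : CD A, (star x).2 = -x.2 := fun _ => rfl
    refine Prod.ext ?_ ?_ <;>
      simp [hm1, hm2, ha1, ha2, hz1, hz2, ho1, ho2, hs1, hs2, mul_add, add_mul, star_add] <;> abel
  zero_mul a := by
    have hm1 : ∀ x y : CD A, (x * y).1 = x.1 * y.1 - star y.2 * x.2 := fun _ _ => rfl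
    have hm2 : ∀ x y : CD A, (x * y).2 = y.2 * x.1 + x.2 * star y.1 := fun _ _ => rfl
    have ha1 : ∀ x y : CD A, (x + y).1 = x.1 + y.1 := fun _ _ => rfl
    have ha2 : ∀ x y : CD A, (x + y).2 = x.2 + y.2 := fun _ _ => rfl
    have hz1 : (0 : CD A).1 = 0 := rfl
    have hz2 : (0 : CD A).2 = 0 := rfl
    have ho1 : (1 : CD A).1 = 1 := rfl
    have ho2 : (1 : CD A).2 = 0 := rfl
    have hs1 : ∀ x : CD A, (star x).1 = star x.1 := fun _ => rfl
    have hs2 : ∀ x : CD A, (star x).2 = -x.2 := fun _ => rfl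
    refine Prod.ext ?_ ?_ <;> simp [hm1, hm2, ha1, ha2, hz1, hz2, ho1, ho2, hs1, hs2]
  mul_zero a := by
    have hm1 : ∀ x y : CD A, (x * y).1 = x.1 * y.1 - star y.2 * x.2 := fun _ _ => rfl
    have hm2 : ∀ x y : CD A, (x * y).2 = y.2 * x.1 + x.2 * star y.1 := fun _ _ => rfl
    have ha1 : ∀ x y : CD A, (x + y).1 = x.1 + y.1 := fun _ _ => rfl
    have ha2 : ∀ x y : CD A, (x + y).2 = x.2 + y.2 := fun _ _ => rfl
    have hz1 : (0 : CD A).1 = 0 := rfl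
    have hz2 : (0 : CD A).2 = 0 := rfl
    have ho1 : (1 : CD A).1 = 1 := rfl
    have ho2 : (1 : CD A).2 = 0 := rfl
    have hs1 : ∀ x : CD A, (star x).1 = star x.1 := fun _ => rfl
    have hs2 : ∀ x : CD A, (star x).2 = -x.2 := fun _ => rfl
    refine Prod.ext ?_ ?_ <;> simp [hm1, hm2, ha1, ha2, hz1, hz2, ho1, ho2, hs1, hs2]
  one_mul a := by
    have hm1 : ∀ x y : CD A, (x * y).1 = x.1 * y.1 - star y.2 * x.2 := fun _ _ => rfl
    have hm2 : ∀ x y : CD A, (x * y).2 = y.2 * x.1 + x.2 * star y.1 := fun _ _ => rfl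
    have ha1 : ∀ x y : CD A, (x + y).1 = x.1 + y.1 := fun _ _ => rfl
    have ha2 : ∀ x y : CD A, (x + y).2 = x.2 + y.2 := fun _ _ => rfl
    have hz1 : (0 : CD A).1 = 0 := rfl
    have hz2 : (0 : CD A).2 = 0 := rfl
    have ho1 : (1 : CD A).1 = 1 := rfl
    have ho2 : (1 : CD A).2 = 0 := rfl
    have hs1 : ∀ x : CD A, (star x).1 = star x.1 := fun _ => rfl
    have hs2 : ∀ x : CD A, (star x).2 = -x.2 := fun _ => rfl
    refine Prod.ext ?_ ?_ <;> simp [hm1, hm2, ha1, ha2, hz1, hz2, ho1, ho2, hs1, hs2]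
  mul_one a := by
    have hm1 : ∀ x y : CD A, (x * y).1 = x.1 * y.1 - star y.2 * x.2 := fun _ _ => rfl
    have hm2 : ∀ x y : CD A, (x * y).2 = y.2 * x.1 + x.2 * star y.1 := fun _ _ => rfl
    have ha1 : ∀ x y : CD A, (x + y).1 = x.1 + y.1 := fun _ _ => rfl
    have ha2 : ∀ x y : CD A, (x + y).2 = x.2 + y.2 := fun _ _ => rfl
    have hz1 : (0 : CD A).1 = 0 := rfl
    have hz2 : (0 : CD A).2 = 0 := rfl
    have ho1 : (1 : CD A).1 = 1 := rfl
    have ho2 : (1 : CD A).2 = 0 := rfl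
    have hs1 : ∀ x : CD A, (star x).1 = star x.1 := fun _ => rfl
    have hs2 : ∀ x : CD A, (star x).2 = -x.2 := fun _ => rfl
    refine Prod.ext ?_ ?_ <;> simp [hm1, hm2, ha1, ha2, hz1, hz2, ho1, ho2, hs1, hs2, StarOne.star_one]

instance instStarAddMonoid : StarAddMonoid (CD A) where
  star_involutive x := by
    have hm1 : ∀ x y : CD A, (x * y).1 = x.1 * y.1 - star y.2 * x.2 := fun _ _ => rfl
    have hm2 : ∀ x y : CD A, (x * y).2 = y.2 * x.1 + x.2 * star y.1 := fun _ _ => rfl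
    have ha1 : ∀ x y : CD A, (x + y).1 = x.1 + y.1 := fun _ _ => rfl
    have ha2 : ∀ x y : CD A, (x + y).2 = x.2 + y.2 := fun _ _ => rfl
    have hz1 : (0 : CD A).1 = 0 := rfl
    have hz2 : (0 : CD A).2 = 0 := rfl
    have ho1 : (1 : CD A).1 = 1 := rfl
    have ho2 : (1 : CD A).2 = 0 := rfl
    have hs1 : ∀ x : CD A, (star x).1 = star x.1 := fun _ => rfl
    have hs2 : ∀ x : CD A, (star x).2 = -x.2 := fun _ => rfl
    refine Prod.ext ?_ ?_ <;> simp [hm1, hm2, ha1, ha2, hz1, hz2, ho1, ho2, hs1, hs2]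
  star_add x y := by
    have hm1 : ∀ x y : CD A, (x * y).1 = x.1 * y.1 - star y.2 * x.2 := fun _ _ => rfl
    have hm2 : ∀ x y : CD A, (x * y).2 = y.2 * x.1 + x.2 * star y.1 := fun _ _ => rfl
    have ha1 : ∀ x y : CD A, (x + y).1 = x.1 + y.1 := fun _ _ => rfl
    have ha2 : ∀ x y : CD A, (x + y).2 = x.2 + y.2 := fun _ _ => rfl
    have hz1 : (0 : CD A).1 = 0 := rfl
    have hz2 : (0 : CD A).2 = 0 := rfl
    have ho1 : (1 : CD A).1 = 1 := rfl
    have ho2 : (1 : CD A).2 = 0 := rfl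
    have hs1 : ∀ x : CD A, (star x).1 = star x.1 := fun _ => rfl
    have hs2 : ∀ x : CD A, (star x).2 = -x.2 := fun _ => rfl
    refine Prod.ext ?_ ?_ <;> simp [hm1, hm2, ha1, ha2, hz1, hz2, ho1, ho2, hs1, hs2, add_comm]

instance instStarOne : StarOne (CD A) :=
  ⟨Prod.ext (StarOne.star_one) (by rw [star_def, one_def]; simp)⟩

end

end CD

instance : CD.StarOne ℝ := ⟨by simp⟩

/-- The real octonions, as a three-fold Cayley–Dickson double of ℝ. -/
def Octonion : Type := CD (CD (CD ℝ))

instance : NonAssocRing Octonion := inferInstanceAs (NonAssocRing (CD (CD (CD ℝ))))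
instance : StarAddMonoid Octonion := inferInstanceAs (StarAddMonoid (CD (CD (CD ℝ))))
instance : CD.StarOne Octonion := inferInstanceAs (CD.StarOne (CD (CD (CD ℝ))))
noncomputable instance : Module ℝ Octonion := inferInstanceAs (Module ℝ (CD (CD (CD ℝ))))

/-- The real sedenions, as the Cayley–Dickson double of the octonions. -/
def Sedenion : Type := CD Octonion

instance : NonAssocRing Sedenion := inferInstanceAs (NonAssocRing (CD Octonion))
instance : StarAddMonoid Sedenion := inferInstanceAs (StarAddMonoid (CD Octonion))
instance : CD.StarOne Sedenion := inferInstanceAs (CD.StarOne (CD Octonion))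
noncomputable instance : Module ℝ Sedenion := inferInstanceAs (Module ℝ (CD Octonion))

/-- Assemble a complex number, quaternion, octonion, sedenion from real coordinates. -/
def mkC (f : ℕ → ℝ) (k : ℕ) : CD ℝ := CD.mk (f k) (f (k+1))
def mkH (f : ℕ → ℝ) (k : ℕ) : CD (CD ℝ) := CD.mk (mkC f k) (mkC f (k+2))
def mkO (f : ℕ → ℝ) (k : ℕ) : Octonion := CD.mk (mkH f k) (mkH f (k+4))
def mkS (f : ℕ → ℝ) : Sedenion := CD.mk (mkO f 0) (mkO f 8)

/-- The standard basis `e₀, …, e₁₅` of the sedenions. -/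
def sE (n : ℕ) : Sedenion := mkS (fun k => if k = n then 1 else 0)

/-- The standard basis `e₀, …, e₇` of the octonions. -/
def oE (n : ℕ) : Octonion := mkO (fun k => if k = n then 1 else 0) 0

/-- Powers in a (power-associative) non-associative algebra. -/
def cdpow {A : Type*} [One A] [Mul A] (x : A) : ℕ → A
  | 0 => 1
  | n+1 => cdpow x n * x

/-! Left multiplication by `α` is adjoint to left multiplication by `ᾱ = -α` for the inner product
`⟨u, v⟩ = re (u v̄)`, so `⟨α x, β⟩ = -⟨x, α β⟩ = 0` for every `x`; as `⟨β, β⟩ = N(β) = 2`, the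
equation `α x = β` has no solution. On the other hand `x̄ = -x` and `x x̄ = 1` force `x² = -1`,
so every element of trace `0` and norm `1`, for instance `e₁`, is a root of `2x² + 2`. -/

namespace CD

section
variable {A : Type*} [NonAssocRing A] [StarAddMonoid A]

@[simp] lemma mk_mul_mk (a b c d : A) :
    mk a b * mk c d = mk (a * c - star d * b) (d * a + b * star c) := rfl

@[simp] lemma star_mk (a b : A) : star (mk a b) = mk (star a) (-b) := rfl

end

section
variable {A : Type*} [AddCommGroup A]

@[simp] lemma mk_add_mk (a b c d : A) : mk a b + mk c d = mk (a + c) (b + d) := rfl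

@[simp] lemma mk_sub_mk (a b c d : A) : mk a b - mk c d = mk (a - c) (b - d) := rfl

@[simp] lemma neg_mk (a b : A) : -mk a b = mk (-a) (-b) := rfl

@[simp] lemma zero_eq_mk : (0 : CD A) = mk 0 0 := rfl

end

@[simp] lemma one_eq_mk {A : Type*} [NonAssocRing A] : (1 : CD A) = mk 1 0 := rfl

@[simp] lemma two_eq_mk {A : Type*} [NonAssocRing A] [StarAddMonoid A] [StarOne A] :
    (2 : CD A) = mk 2 0 := by
  rw [← one_add_one_eq_two, one_eq_mk, mk_add_mk, one_add_one_eq_two, add_zero]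

@[simp] lemma fst_mk {A : Type*} (a b : A) : (mk a b).1 = a := rfl

@[simp] lemma mk_inj {A : Type*} {a b c d : A} : mk a b = mk c d ↔ a = c ∧ b = d := Prod.ext_iff

lemma forall_mk {A : Type*} {P : CD A → Prop} : (∀ x, P x) ↔ ∀ a b, P (mk a b) := Prod.forall

end CD

theorem mul_self_eq_neg_one_of_add_star_eq_zero {A : Type*} [NonAssocRing A] [Star A] {x : A}
    (htrace : x + star x = 0) (hnorm : x * star x = 1) : x * x = -1 := by
  rw [← neg_eq_of_add_eq_zero_right htrace, mul_neg] at hnorm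
  exact neg_eq_iff_eq_neg.mp hnorm

/- `Sedenion` and `Octonion` are `def`s, which `simp` does not unfold, so the generic `CD` lemmas
above do not fire on them; computations are done in the iterated double `𝕊` itself and transferred
to `Sedenion` by unfolding definitions. -/
local notation "𝕊" => CD (CD (CD (CD ℝ)))

namespace Sedenion

/-- `sE n`, built in `𝕊`. -/
def e (n : ℕ) : 𝕊 :=
  CD.mk (mkO (fun k => if k = n then 1 else 0) 0) (mkO (fun k => if k = n then 1 else 0) 8)

def α : 𝕊 := e 1 + e 10

def β : 𝕊 := e 7 + e 12

def re (x : 𝕊) : ℝ := x.1.1.1.1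

lemma alpha_mul_star_alpha : α * star α = 2 := by
  simp [α, e, mkO, mkH, mkC, one_add_one_eq_two]

lemma beta_mul_star_beta : β * star β = 2 := by
  simp [β, e, mkO, mkH, mkC, one_add_one_eq_two]

lemma alpha_mul_star_beta_add_beta_mul_star_alpha : α * star β + β * star α = 0 := by
  simp [α, β, e, mkO, mkH, mkC]

lemma re_alpha_mul_mul_star_beta (x : 𝕊) : re (α * x * star β) = 0 := by
  revert x
  simp only [CD.forall_mk]
  intros
  simp [α, β, e, mkO, mkH, mkC, re]

lemma alpha_mul_ne_beta (x : 𝕊) : α * x ≠ β := by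
  intro h
  have horth := re_alpha_mul_mul_star_beta x
  rw [h, beta_mul_star_beta] at horth
  simp [re] at horth

lemma e_one_add_star : e 1 + star (e 1) = 0 := by
  simp [e, mkO, mkH, mkC]

lemma e_one_mul_star : e 1 * star (e 1) = 1 := by
  simp [e, mkO, mkH, mkC]

end Sedenion

/-- In the sedenions, with `α = e₁ + e₁₀` and `β = e₇ + e₁₂`, the
polynomial `f(x) = α x - β` has no roots; its companion polynomial
`C_f(x) = f(x)·conj(f(x)) = N(α)x² - (α β̄ + β ᾱ)x + N(β) = 2x² + 2` (since `N(α) = N(β) = 2`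
and `α·star β + β·star α = 0`) does have roots in `𝕊`: every element of trace `0` and
norm `1` is a root, and such elements exist. Hence not every root of the companion
polynomial is quadratically equivalent to a root of `f`. -/
theorem stmt8 :
    (¬ ∃ x : Sedenion, (sE 1 + sE 10) * x - (sE 7 + sE 12) = 0) ∧
    (sE 1 + sE 10) * star (sE 1 + sE 10) = 2 ∧
    (sE 7 + sE 12) * star (sE 7 + sE 12) = 2 ∧
    (sE 1 + sE 10) * star (sE 7 + sE 12) + (sE 7 + sE 12) * star (sE 1 + sE 10) = 0 ∧
    (∀ x : Sedenion, x + star x = 0 → x * star x = 1 →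
      (2 : Sedenion) * (x * x) + 2 = 0) ∧
    (∃ x : Sedenion, x + star x = 0 ∧ x * star x = 1) := by
  refine ⟨fun ⟨x, hx⟩ => Sedenion.alpha_mul_ne_beta x (sub_eq_zero.mp hx),
    Sedenion.alpha_mul_star_alpha, Sedenion.beta_mul_star_beta,
    Sedenion.alpha_mul_star_beta_add_beta_mul_star_alpha, fun x htrace hnorm => ?_,
    Sedenion.e 1, Sedenion.e_one_add_star, Sedenion.e_one_mul_star⟩
  rw [mul_self_eq_neg_one_of_add_star_eq_zero htrace hnorm, mul_neg_one, neg_add_cancel]
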